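/- arXiv:2310.04396 — 2 statements merged into one kernel-verified Lean document; each statement's English description precedes it below -/
import Mathlib

section
/- Let g ∈ H, let L ∈ ℤ_{≥0}, and let T_L g denote the L-th order Taylor polynomial of g at 0 ∈ ℝ^m, i.e. (T_L g)(x) = Σ_{α ∈ (ℤ_{≥0})^m, |α| ≤ L} (D^α g(0)/α!)·x^α. Then for every x ∈ ℝ^m: |g(x) − (T_L g)(x)| ≤ ( exp(‖x‖₁) − Σ_{k=0}^{L} ‖x‖₁^k / k! ) · ‖g‖_∞. Moreover, if ‖x‖₁ ≤ 1 + L/2, then |g(x) − (T_L g)(x)| ≤ 2·(‖x‖₁^{L+1}/(L+1)!)·‖g‖_∞. -/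
open scoped Real BigOperators
open MeasureTheory Filter

noncomputable section

/-- The frequency grid `{-1,0,1}^m`. -/
def Omega (m : ℕ) : Finset (Fin m → ℤ) :=
  Fintype.piFinset fun _ => ({-1, 0, 1} : Finset ℤ)

/-- `ω ⬝ x = Σ_j ω_j x_j`. -/
def dotZ {m : ℕ} (ω : Fin m → ℤ) (x : Fin m → ℝ) : ℝ := ∑ j, (ω j : ℝ) * x j

/-- The kernel `K(x,z) = (2π)^{-m} Σ_{ω∈{-1,0,1}^m} e^{i ω·(x-z)}` (a real number). -/
def Kker (m : ℕ) (x z : Fin m → ℝ) : ℝ :=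
  ((2 * Real.pi) ^ m)⁻¹ *
    (∑ ω ∈ Omega m, Complex.exp (Complex.I * (dotZ ω (x - z) : ℝ))).re

/-- `K_x = K(x, ·)`. -/
def Kfun (m : ℕ) (x : Fin m → ℝ) : (Fin m → ℝ) → ℝ := fun z => Kker m x z

/-- The space `H` of real functions of the form `Σ_{ω∈{-1,0,1}^m} c_ω e^{i ω·z}`
with `c_{-ω} = conj (c_ω)`. -/
def Hset (m : ℕ) : Set ((Fin m → ℝ) → ℝ) :=
  { g | ∃ c : (Fin m → ℤ) → ℂ,
      (∀ ω, c (-ω) = starRingEnd ℂ (c ω)) ∧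
      ∀ z, (g z : ℂ) = ∑ ω ∈ Omega m, c ω * Complex.exp (Complex.I * (dotZ ω z : ℝ)) }

/-- The cube `[-π,π]^m`. -/
def box (m : ℕ) : Set (Fin m → ℝ) := Set.univ.pi fun _ => Set.Icc (-Real.pi) Real.pi

/-- Inner product `⟨g₁,g₂⟩_H = ∫_{[-π,π]^m} g₁ g₂`. -/
def innerH (m : ℕ) (g₁ g₂ : (Fin m → ℝ) → ℝ) : ℝ := ∫ z in box m, g₁ z * g₂ z

/-- Partial derivative in direction `j`. -/
def partialD {m : ℕ} (j : Fin m) (g : (Fin m → ℝ) → ℝ) : (Fin m → ℝ) → ℝ :=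
  fun x => fderiv ℝ g x (Pi.single j 1)

/-- Iterated partial derivative `D^α`. -/
def Dmulti {m : ℕ} (α : Fin m → ℕ) (g : (Fin m → ℝ) → ℝ) : (Fin m → ℝ) → ℝ :=
  (List.finRange m).foldr (fun j h => (partialD j)^[α j] h) g

/-- The index set `{-1,1}^{|α|}`, with entries indexed as `𝔦_{j,k}`, `j : Fin m`, `k : Fin (α j)`. -/
def ShiftSet {m : ℕ} (α : Fin m → ℕ) : Finset (∀ j : Fin m, Fin (α j) → ℤ) :=
  Fintype.piFinset fun j => Fintype.piFinset fun _ => ({-1, 1} : Finset ℤ)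

/-- The product `𝔦^{(1,…,1)}` of all entries of `𝔦`. -/
def signProd {m : ℕ} (α : Fin m → ℕ) (ε : ∀ j : Fin m, Fin (α j) → ℤ) : ℝ :=
  ∏ j, ∏ k, ((ε j k : ℤ) : ℝ)

/-- The shifted point `p_{α,𝔦}`, with `j`-th coordinate `(π/2)·((Σ_k 𝔦_{j,k}) mod 4)`,
the representative mod 4 taken in `{0,1,2,3}`. -/
def pshift {m : ℕ} (α : Fin m → ℕ) (ε : ∀ j : Fin m, Fin (α j) → ℤ) : Fin m → ℝ :=
  fun j => (Real.pi / 2) * (((∑ k, ε j k) % 4 : ℤ) : ℝ)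

/-- The point of the grid `(π/2)·{-1,0,1}^m` coded by `s : Fin m → Fin 3`. -/
def pt3 (m : ℕ) (s : Fin m → Fin 3) : Fin m → ℝ :=
  fun j => (Real.pi / 2) * (((s j : ℕ) : ℝ) - 1)

/-- The point of the grid `(π/2)·{0,1,2,3}^m` coded by `s : Fin m → Fin 4`. -/
def pt4 (m : ℕ) (s : Fin m → Fin 4) : Fin m → ℝ :=
  fun j => (Real.pi / 2) * ((s j : ℕ) : ℝ)

/-- The grid `(π/2)·{-1,0,1}^m ⊆ ℝ^m`. -/
def grid3 (m : ℕ) : Set (Fin m → ℝ) := Set.range (pt3 m)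

/-- The grid `(π/2)·{0,1,2,3}^m ⊆ ℝ^m`. -/
def grid4 (m : ℕ) : Set (Fin m → ℝ) := Set.range (pt4 m)

/-- `I_d`: points of `ℝ^m` with at most `d` nonzero coordinates. -/
def Iset (m d : ℕ) : Set (Fin m → ℝ) := { z | Set.ncard { j : Fin m | z j ≠ 0 } ≤ d }

/-- Multiindices `α ∈ (ℤ_{≥0})^m` with `|α| ≤ L`, as a finset. -/
def multiIdx (m L : ℕ) : Finset (Fin m → ℕ) :=
  (Fintype.piFinset fun _ : Fin m => Finset.range (L + 1)).filter fun α => ∑ j, α j ≤ L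

/-- The sup norm `‖g‖_∞ = sup_z |g(z)|`. -/
def supNorm (m : ℕ) (g : (Fin m → ℝ) → ℝ) : ℝ := ⨆ z : Fin m → ℝ, |g z|

/-- The norm `‖g‖_H = √⟨g,g⟩_H`. -/
def normH (m : ℕ) (g : (Fin m → ℝ) → ℝ) : ℝ := Real.sqrt (innerH m g g)

end

/-!
Write `g = Re Σ_ω c_ω e^{i ω·z}`. Every frequency component satisfies `ω_j ∈ {-1,0,1}`, hence
`sin (ω_j π/2) = ω_j`, so `∂_j g` is the central difference
`(g (z + (π/2) e_j) - g (z - (π/2) e_j)) / 2` and is again of the same form. Therefore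
`|D^α g| ≤ ‖g‖_∞` for every `α`. The degree-`K` part of the Taylor polynomial is
`Re Σ_ω c_ω (i ω·x)^K / K!`; these sum to `g x`, and by the multinomial theorem each is at most
`‖g‖_∞ ‖x‖₁^K / K!`. Summing the tail gives the first bound. When `‖x‖₁ ≤ 1 + L/2`, the tail of
the exponential series past the `L`-th term is dominated by a geometric series of ratio
`‖x‖₁ / (L + 2) ≤ 1/2`, which gives the second.
-/

section ExpSeries

open Finset
open scoped Nat

namespace Real

lemma hasSum_pow_div_factorial_nat_add (s : ℝ) (n : ℕ) :
    HasSum (fun i => s ^ (i + n) / (i + n)!) (exp s - ∑ k ∈ range n, s ^ k / k !) := by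
  refine (hasSum_nat_add_iff' (f := fun k => s ^ k / k !) n).2 ?_
  rw [exp_eq_exp_ℝ]
  exact NormedSpace.expSeries_div_hasSum_exp s

lemma exp_sub_sum_range_le_two_mul {s : ℝ} {L : ℕ} (hs : 0 ≤ s) (hsL : s ≤ 1 + (L : ℝ) / 2) :
    exp s - ∑ k ∈ range (L + 1), s ^ k / k ! ≤ 2 * (s ^ (L + 1) / (L + 1)!) := by
  set a := s ^ (L + 1) / ((L + 1)! : ℝ)
  have hgeo : HasSum (fun i : ℕ => a * (1 / 2) ^ i) (2 * a) := by
    simpa [mul_comm] using hasSum_geometric_two.mul_left a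
  refine hasSum_le (fun i => ?_) (hasSum_pow_div_factorial_nat_add s (L + 1)) hgeo
  have hfac : ((L + 1)! : ℝ) * ((L : ℝ) + 2) ^ i ≤ ((i + (L + 1))! : ℝ) := by
    rw [add_comm i]
    exact_mod_cast (Nat.factorial_mul_pow_le_factorial (m := L + 1) (n := i))
  have hratio : s / ((L : ℝ) + 2) ≤ 1 / 2 := by
    rw [div_le_iff₀ (by positivity)]; linarith
  calc s ^ (i + (L + 1)) / ((i + (L + 1))! : ℝ)
      ≤ s ^ (i + (L + 1)) / (((L + 1)! : ℝ) * ((L : ℝ) + 2) ^ i) := by gcongr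
    _ = a * (s / ((L : ℝ) + 2)) ^ i := by rw [pow_add, div_pow]; ring
    _ ≤ a * (1 / 2) ^ i := by gcongr

end Real

lemma abs_sub_sum_range_le_of_hasSum {T : ℕ → ℝ} {a B s : ℝ} (hT : HasSum T a)
    (hbound : ∀ k, |T k| ≤ B * (s ^ k / k !)) (n : ℕ) :
    |a - ∑ k ∈ range n, T k| ≤ B * (Real.exp s - ∑ k ∈ range n, s ^ k / k !) :=
  ((hasSum_nat_add_iff' n).2 hT).norm_le_of_bounded
    ((Real.hasSum_pow_div_factorial_nat_add s n).mul_left B) fun i => hbound (i + n)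

end ExpSeries

section Multinomial

open Finset
open scoped Nat

lemma sum_piAntidiag_inv_prod_factorial_mul_prod_pow {ι R : Type*} [Fintype ι] [DecidableEq ι]
    [Field R] [CharZero R] (y : ι → R) (K : ℕ) :
    ∑ α ∈ piAntidiag univ K, ((∏ j, (α j)! : ℕ) : R)⁻¹ * ∏ j, y j ^ α j
      = (∑ j, y j) ^ K / K ! := by
  rw [sum_pow_eq_sum_piAntidiag, sum_div]
  refine sum_congr rfl fun α hα => ?_
  have hspec : ((∏ j, (α j)! : ℕ) : R) * Nat.multinomial univ α = K ! := by
    rw [← (mem_piAntidiag.1 hα).1]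
    exact_mod_cast Nat.multinomial_spec univ α
  have hprod : ((∏ j, (α j)! : ℕ) : R) ≠ 0 := Nat.cast_ne_zero.2 (by positivity)
  have hmult : (Nat.multinomial univ α : R) ≠ 0 := Nat.cast_ne_zero.2 (Nat.multinomial_pos _ _).ne'
  rw [← hspec]
  field_simp

lemma sum_multiIdx_eq_sum_range_sum_piAntidiag {m : ℕ} {M : Type*} [AddCommMonoid M]
    (L : ℕ) (F : (Fin m → ℕ) → M) :
    ∑ α ∈ multiIdx m L, F α = ∑ K ∈ range (L + 1), ∑ α ∈ piAntidiag univ K, F α := by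
  rw [← sum_fiberwise_of_maps_to (g := fun α => ∑ j, α j) (t := range (L + 1))]
  · refine sum_congr rfl fun K hK => sum_congr ?_ fun _ _ => rfl
    ext α
    simp only [multiIdx, mem_filter, Fintype.mem_piFinset, mem_range, mem_piAntidiag,
      mem_univ, implies_true, and_true] at hK ⊢
    constructor
    · exact fun h => h.2
    · rintro rfl
      exact ⟨⟨fun j => Nat.lt_succ_of_le ((single_le_sum (fun i _ => Nat.zero_le _)
        (mem_univ j)).trans (Nat.lt_succ_iff.1 hK)), Nat.lt_succ_iff.1 hK⟩, rfl⟩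
  · intro α hα
    exact mem_range.2 (Nat.lt_succ_of_le (mem_filter.1 hα).2)

end Multinomial

noncomputable section TrigSum

open Complex

variable {m : ℕ}

def trigSum (c : (Fin m → ℤ) → ℂ) (z : Fin m → ℝ) : ℂ :=
  ∑ ω ∈ Omega m, c ω * cexp (I * dotZ ω z)

def HasTrigCoeffs (c : (Fin m → ℤ) → ℂ) (g : (Fin m → ℝ) → ℝ) : Prop :=
  ∀ z, g z = (trigSum c z).re

lemma exists_hasTrigCoeffs_of_mem_Hset {g : (Fin m → ℝ) → ℝ} (hg : g ∈ Hset m) :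
    ∃ c, HasTrigCoeffs c g := by
  obtain ⟨c, -, hc⟩ := hg
  exact ⟨c, fun z => by rw [trigSum, ← hc z, ofReal_re]⟩

def dotZCLM (ω : Fin m → ℤ) : (Fin m → ℝ) →L[ℝ] ℝ :=
  ∑ j, (ω j : ℝ) • ContinuousLinearMap.proj j

lemma dotZCLM_apply (ω : Fin m → ℤ) (z : Fin m → ℝ) : dotZCLM ω z = dotZ ω z := by
  simp [dotZCLM, dotZ]

lemma dotZ_single (ω : Fin m → ℤ) (j : Fin m) : dotZ ω (Pi.single j 1) = ω j := by
  simp [dotZ, Pi.single_apply]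

lemma dotZ_add_smul_single (ω : Fin m → ℤ) (z : Fin m → ℝ) (j : Fin m) (t : ℝ) :
    dotZ ω (z + t • Pi.single j 1) = dotZ ω z + t * ω j := by
  rw [← dotZCLM_apply, map_add, map_smul, dotZCLM_apply, dotZCLM_apply, dotZ_single, smul_eq_mul]

lemma hasFDerivAt_re_trigSum (c : (Fin m → ℤ) → ℂ) (z : Fin m → ℝ) :
    HasFDerivAt (fun z => (trigSum c z).re)
      (reCLM.comp (∑ ω ∈ Omega m,
        (c ω * cexp (I * dotZ ω z) * I) • ofRealCLM.comp (dotZCLM ω))) z := by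
  refine reCLM.hasFDerivAt.comp z (HasFDerivAt.fun_sum fun ω _ => ?_)
  have hdot : HasFDerivAt (fun z => (dotZ ω z : ℂ)) (ofRealCLM.comp (dotZCLM ω)) z := by
    refine ofRealCLM.hasFDerivAt.comp z ((dotZCLM ω).hasFDerivAt.congr_of_eventuallyEq ?_)
    exact Filter.Eventually.of_forall fun y => (dotZCLM_apply ω y).symm
  refine (((hdot.const_mul I).cexp).const_mul (c ω)).congr_fderiv ?_
  ext v
  simp only [smul_apply]
  ring

lemma hasTrigCoeffs_partialD {c : (Fin m → ℤ) → ℂ} {g : (Fin m → ℝ) → ℝ}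
    (h : HasTrigCoeffs c g) (j : Fin m) :
    HasTrigCoeffs (fun ω => c ω * (I * ω j)) (partialD j g) := by
  intro z
  rw [partialD, funext h, (hasFDerivAt_re_trigSum c z).fderiv]
  simp only [ContinuousLinearMap.coe_comp, Function.comp_apply, sum_apply,
    smul_apply, reCLM_apply, ofRealCLM_apply, dotZCLM_apply, dotZ_single,
    trigSum, smul_eq_mul]
  congr 1
  exact Finset.sum_congr rfl fun ω _ => by push_cast; ring

lemma cexp_mul_I_sub_cexp_neg_mul_I {w : ℤ} (hw : w ∈ ({-1, 0, 1} : Finset ℤ)) :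
    cexp (w * (π / 2) * I) - cexp (-(w * (π / 2) * I)) = 2 * (I * w) := by
  fin_cases hw <;> simp [exp_pi_div_two_mul_I, exp_neg] <;> ring

lemma HasTrigCoeffs.partialD_eq_sub {c : (Fin m → ℤ) → ℂ} {g : (Fin m → ℝ) → ℝ}
    (h : HasTrigCoeffs c g) (j : Fin m) (z : Fin m → ℝ) :
    partialD j g z =
      (g (z + (π / 2) • Pi.single j 1) - g (z + (-(π / 2)) • Pi.single j 1)) / 2 := by
  rw [hasTrigCoeffs_partialD h j z, h, h, ← sub_re, eq_div_iff two_ne_zero, ← re_mul_ofReal]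
  congr 1
  push_cast
  simp only [trigSum, ← Finset.sum_sub_distrib, Finset.sum_mul, ← mul_sub]
  refine Finset.sum_congr rfl fun ω hω => ?_
  have hωj : ω j ∈ ({-1, 0, 1} : Finset ℤ) := Fintype.mem_piFinset.1 hω j
  rw [dotZ_add_smul_single, dotZ_add_smul_single]
  push_cast
  rw [mul_add, mul_add, exp_add, exp_add, ← mul_sub,
    show I * (π / 2 * ω j) = ω j * (π / 2) * I by ring,
    show I * (-(π / 2) * ω j) = -(ω j * (π / 2) * I) by ring,
    cexp_mul_I_sub_cexp_neg_mul_I hωj]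
  ring

def boundedTrigSums (m : ℕ) (B : ℝ) : Set ((Fin m → ℝ) → ℝ) :=
  {g | (∃ c, HasTrigCoeffs c g) ∧ ∀ z, |g z| ≤ B}

lemma mapsTo_partialD_boundedTrigSums (B : ℝ) (j : Fin m) :
    Set.MapsTo (partialD j) (boundedTrigSums m B) (boundedTrigSums m B) := by
  rintro g ⟨⟨c, hc⟩, hB⟩
  refine ⟨⟨_, hasTrigCoeffs_partialD hc j⟩, fun z => ?_⟩
  rw [hc.partialD_eq_sub, abs_div, abs_two, div_le_iff₀ two_pos]
  linarith [abs_sub (g (z + (π / 2) • Pi.single j 1)) (g (z + (-(π / 2)) • Pi.single j 1)),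
    hB (z + (π / 2) • Pi.single j 1), hB (z + (-(π / 2)) • Pi.single j 1)]

lemma Dmulti_mem_boundedTrigSums {B : ℝ} {g : (Fin m → ℝ) → ℝ} (hg : g ∈ boundedTrigSums m B)
    (α : Fin m → ℕ) : Dmulti α g ∈ boundedTrigSums m B := by
  rw [Dmulti]
  induction List.finRange m with
  | nil => exact hg
  | cons j l ih => exact (mapsTo_partialD_boundedTrigSums B j).iterate (α j) ih

lemma hasTrigCoeffs_iterate_partialD {c : (Fin m → ℤ) → ℂ} {g : (Fin m → ℝ) → ℝ}
    (h : HasTrigCoeffs c g) (j : Fin m) (n : ℕ) :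
    HasTrigCoeffs (fun ω => c ω * (I * ω j) ^ n) ((partialD j)^[n] g) := by
  induction n with
  | zero => simpa using h
  | succ n ih =>
    rw [Function.iterate_succ_apply']
    convert hasTrigCoeffs_partialD ih j using 2
    ring

lemma hasTrigCoeffs_Dmulti {c : (Fin m → ℤ) → ℂ} {g : (Fin m → ℝ) → ℝ}
    (h : HasTrigCoeffs c g) (α : Fin m → ℕ) :
    HasTrigCoeffs (fun ω => c ω * ∏ j, (I * ω j) ^ α j) (Dmulti α g) := by
  simp only [Dmulti, Fin.prod_univ_def]
  induction List.finRange m with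
  | nil => simpa using h
  | cons j l ih =>
    simp only [List.foldr_cons, List.map_cons, List.prod_cons]
    convert hasTrigCoeffs_iterate_partialD ih j (α j) using 2
    ring

lemma HasTrigCoeffs.Dmulti_apply_zero {c : (Fin m → ℤ) → ℂ} {g : (Fin m → ℝ) → ℝ}
    (h : HasTrigCoeffs c g) (α : Fin m → ℕ) :
    Dmulti α g 0 = (∑ ω ∈ Omega m, c ω * ∏ j, (I * ω j) ^ α j).re := by
  simp [hasTrigCoeffs_Dmulti h α 0, trigSum, dotZ]

lemma HasTrigCoeffs.bddAbove_range_abs {c : (Fin m → ℤ) → ℂ} {g : (Fin m → ℝ) → ℝ}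
    (h : HasTrigCoeffs c g) : BddAbove (Set.range fun z => |g z|) := by
  refine ⟨∑ ω ∈ Omega m, ‖c ω‖, ?_⟩
  rintro - ⟨z, rfl⟩
  calc |g z| = |(trigSum c z).re| := by rw [h z]
    _ ≤ ‖trigSum c z‖ := abs_re_le_norm _
    _ ≤ ∑ ω ∈ Omega m, ‖c ω * cexp (I * dotZ ω z)‖ := norm_sum_le _ _
    _ = ∑ ω ∈ Omega m, ‖c ω‖ := by simp [norm_exp]

lemma HasTrigCoeffs.abs_le_supNorm {c : (Fin m → ℤ) → ℂ} {g : (Fin m → ℝ) → ℝ}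
    (h : HasTrigCoeffs c g) (z : Fin m → ℝ) : |g z| ≤ supNorm m g :=
  le_ciSup h.bddAbove_range_abs z

lemma HasTrigCoeffs.supNorm_nonneg {c : (Fin m → ℤ) → ℂ} {g : (Fin m → ℝ) → ℝ}
    (h : HasTrigCoeffs c g) : 0 ≤ supNorm m g :=
  (abs_nonneg _).trans (h.abs_le_supNorm 0)

lemma HasTrigCoeffs.abs_Dmulti_le_supNorm {c : (Fin m → ℤ) → ℂ} {g : (Fin m → ℝ) → ℝ}
    (h : HasTrigCoeffs c g) (α : Fin m → ℕ) (z : Fin m → ℝ) : |Dmulti α g z| ≤ supNorm m g :=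
  (Dmulti_mem_boundedTrigSums ⟨⟨c, h⟩, h.abs_le_supNorm⟩ α).2 z

end TrigSum

noncomputable section TaylorSeries

open Complex Finset
open scoped Nat

variable {m : ℕ}

def homTaylor (g : (Fin m → ℝ) → ℝ) (x : Fin m → ℝ) (K : ℕ) : ℝ :=
  ∑ α ∈ piAntidiag univ K, Dmulti α g 0 / ((∏ j, (α j)! : ℕ) : ℝ) * ∏ j, x j ^ α j

lemma abs_homTaylor_le {g : (Fin m → ℝ) → ℝ} {B : ℝ} (hB : ∀ α, |Dmulti α g 0| ≤ B)
    (x : Fin m → ℝ) (K : ℕ) : |homTaylor g x K| ≤ B * ((∑ j, |x j|) ^ K / K !) := by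
  rw [← sum_piAntidiag_inv_prod_factorial_mul_prod_pow, mul_sum]
  refine (abs_sum_le_sum_abs _ _).trans (sum_le_sum fun α _ => ?_)
  calc |Dmulti α g 0 / ((∏ j, (α j)! : ℕ) : ℝ) * ∏ j, x j ^ α j|
      = |Dmulti α g 0| * (((∏ j, (α j)! : ℕ) : ℝ)⁻¹ * ∏ j, |x j| ^ α j) := by
        rw [abs_mul, abs_div, Nat.abs_cast, abs_prod]
        simp only [abs_pow]
        ring
    _ ≤ B * (((∏ j, (α j)! : ℕ) : ℝ)⁻¹ * ∏ j, |x j| ^ α j) := by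
        gcongr
        exact hB α

lemma HasTrigCoeffs.homTaylor_eq {c : (Fin m → ℤ) → ℂ} {g : (Fin m → ℝ) → ℝ}
    (h : HasTrigCoeffs c g) (x : Fin m → ℝ) (K : ℕ) :
    homTaylor g x K = (∑ ω ∈ Omega m, c ω * ((I * dotZ ω x) ^ K / K !)).re := by
  have hterm : ∀ α : Fin m → ℕ, Dmulti α g 0 / ((∏ j, (α j)! : ℕ) : ℝ) * ∏ j, x j ^ α j =
      (∑ ω ∈ Omega m, c ω * (((∏ j, (α j)! : ℕ) : ℂ)⁻¹ * ∏ j, (I * ω j * x j) ^ α j)).re := by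
    intro α
    rw [h.Dmulti_apply_zero, div_mul_eq_mul_div, mul_div_assoc, mul_comm, div_eq_inv_mul,
      ← re_ofReal_mul, mul_sum]
    congr 1
    refine sum_congr rfl fun ω _ => ?_
    simp only [mul_pow, prod_mul_distrib]
    push_cast
    ring
  simp only [homTaylor, hterm, ← re_sum]
  rw [sum_comm]
  simp only [← mul_sum, sum_piAntidiag_inv_prod_factorial_mul_prod_pow]
  congr 1
  refine sum_congr rfl fun ω _ => ?_
  push_cast [dotZ, mul_sum]
  simp only [mul_assoc]

lemma HasTrigCoeffs.hasSum_homTaylor {c : (Fin m → ℤ) → ℂ} {g : (Fin m → ℝ) → ℝ}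
    (h : HasTrigCoeffs c g) (x : Fin m → ℝ) : HasSum (homTaylor g x) (g x) := by
  rw [h x, funext (h.homTaylor_eq x)]
  refine hasSum_re (hasSum_sum fun ω _ => HasSum.mul_left (c ω) ?_)
  rw [exp_eq_exp_ℂ]
  exact NormedSpace.expSeries_div_hasSum_exp _

end TaylorSeries

theorem taylor_remainder_bound_general (m : ℕ)
    (g : (Fin m → ℝ) → ℝ) (hg : g ∈ Hset m) (L : ℕ) (x : Fin m → ℝ) :
    |g x - ∑ α ∈ multiIdx m L,
        (Dmulti α g 0 / ((∏ j, Nat.factorial (α j) : ℕ) : ℝ)) * ∏ j, x j ^ α j|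
      ≤ (Real.exp (∑ j, |x j|) -
          ∑ k ∈ Finset.range (L + 1), (∑ j, |x j|) ^ k / (Nat.factorial k : ℝ)) * supNorm m g
    ∧ ((∑ j, |x j|) ≤ 1 + (L : ℝ) / 2 →
        |g x - ∑ α ∈ multiIdx m L,
            (Dmulti α g 0 / ((∏ j, Nat.factorial (α j) : ℕ) : ℝ)) * ∏ j, x j ^ α j|
          ≤ 2 * ((∑ j, |x j|) ^ (L + 1) / (Nat.factorial (L + 1) : ℝ)) * supNorm m g) := by
  obtain ⟨c, hc⟩ := exists_hasTrigCoeffs_of_mem_Hset hg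
  have hbound := abs_sub_sum_range_le_of_hasSum (hc.hasSum_homTaylor x)
    (abs_homTaylor_le (fun α => hc.abs_Dmulti_le_supNorm α 0) x) (L + 1)
  rw [mul_comm] at hbound
  rw [sum_multiIdx_eq_sum_range_sum_piAntidiag]
  refine ⟨hbound, fun hsmall => hbound.trans ?_⟩
  exact mul_le_mul_of_nonneg_right
    (Real.exp_sub_sum_range_le_two_mul (by positivity) hsmall) hc.supNorm_nonneg

/-- Taylor remainder bounds: for `g ∈ H`, `L ∈ ℤ_{≥0}` and `x ∈ ℝ^m`,
`|g(x) - (T_L g)(x)| ≤ (exp ‖x‖₁ - Σ_{k≤L} ‖x‖₁^k/k!) ‖g‖_∞`, and if `‖x‖₁ ≤ 1 + L/2`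
then `|g(x) - (T_L g)(x)| ≤ 2 (‖x‖₁^{L+1}/(L+1)!) ‖g‖_∞`. -/
theorem taylor_remainder_bound (m : ℕ) (hm : 0 < m)
    (g : (Fin m → ℝ) → ℝ) (hg : g ∈ Hset m) (L : ℕ) (x : Fin m → ℝ) :
    |g x - ∑ α ∈ multiIdx m L,
        (Dmulti α g 0 / ((∏ j, Nat.factorial (α j) : ℕ) : ℝ)) * ∏ j, x j ^ α j|
      ≤ (Real.exp (∑ j, |x j|) -
          ∑ k ∈ Finset.range (L + 1), (∑ j, |x j|) ^ k / (Nat.factorial k : ℝ)) * supNorm m g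
    ∧ ((∑ j, |x j|) ≤ 1 + (L : ℝ) / 2 →
        |g x - ∑ α ∈ multiIdx m L,
            (Dmulti α g 0 / ((∏ j, Nat.factorial (α j) : ℕ) : ℝ)) * ∏ j, x j ^ α j|
          ≤ 2 * ((∑ j, |x j|) ^ (L + 1) / (Nat.factorial (L + 1) : ℝ)) * supNorm m g) :=
  taylor_remainder_bound_general m g hg L x
end

section
/- The family (K_q)_{q ∈ (π/2)·{−1,0,1}^m}, indexed by the 3^m points q of the grid (π/2)·{−1,0,1}^m, is a basis of the real vector space H. -/
open scoped Real BigOperators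
open MeasureTheory Filter

/-! Since `K(x, z) = (2π)^{-m} ∏ⱼ (1 + 2 cos (xⱼ - zⱼ))`, at a grid point `q` the function `K_q`
is, up to a constant, a product of the one-variable factors `1 - 2 sin`, `1 + 2 cos`, `1 + 2 sin`.
These span the same space as `1, cos, sin`, and products of `1, cos, sin` span `H`: expand every
`e^{i ωⱼ zⱼ}` over `ℂ` and take real parts. Evaluating at the grid `(π/2)·{0,1,2}^m` turns the
family into the `m`-fold Kronecker power of an invertible `3 × 3` matrix, whence independence. -/

open Submodule

section ProductFamilies

variable {ι κ α R : Type*} [Fintype ι] [DecidableEq ι] [Fintype κ] [CommRing R]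

def piProd (F : κ → α → R) (t : ι → κ) : (ι → α) → R := fun z => ∏ j, F (t j) (z j)

theorem prod_mem_span_piProd (F : κ → α → R) {f : ι → α → R}
    (hf : ∀ j, f j ∈ span R (Set.range F)) :
    (fun z => ∏ j, f j (z j)) ∈ span R (Set.range (piProd F : (ι → κ) → (ι → α) → R)) := by
  choose A hA using fun j => (mem_span_range_iff_exists_fun R).mp (hf j)
  have hexpand : (fun z => ∏ j, f j (z j)) = ∑ t : ι → κ, (∏ j, A j (t j)) • piProd F t := by
    funext z
    simp only [← hA, Finset.sum_apply, Pi.smul_apply, smul_eq_mul, Fintype.prod_sum, piProd,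
      Finset.prod_mul_distrib]
  rw [hexpand]
  exact sum_mem fun t _ => smul_mem _ _ (subset_span ⟨t, rfl⟩)

theorem span_range_piProd_le {F G : κ → α → R} (h : ∀ s, F s ∈ span R (Set.range G)) :
    span R (Set.range (piProd F : (ι → κ) → (ι → α) → R)) ≤ span R (Set.range (piProd G)) :=
  span_le.mpr (Set.range_subset_iff.mpr fun t => prod_mem_span_piProd G fun j => h (t j))

variable [DecidableEq κ]

def Matrix.piTensorHom : Matrix κ κ R →* Matrix (ι → κ) (ι → κ) R where
  toFun M := Matrix.of fun s t => ∏ j, M (s j) (t j)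
  map_one' := by
    ext s t
    simp only [Matrix.of_apply, Matrix.one_apply, Fintype.prod_boole, funext_iff]
  map_mul' M N := by
    ext s u
    simp only [Matrix.of_apply, Matrix.mul_apply, Fintype.prod_sum, Finset.prod_mul_distrib]

theorem linearIndependent_piProd (F : κ → α → R) (p : κ → α)
    (hF : IsUnit (Matrix.of fun s t => F s (p t))) :
    LinearIndependent R (piProd F : (ι → κ) → (ι → α) → R) := by
  refine LinearIndependent.of_comp (LinearMap.funLeft R R fun (t : ι → κ) j => p (t j)) ?_
  convert Matrix.linearIndependent_rows_of_isUnit (hF.map (Matrix.piTensorHom (ι := ι)))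
  rfl

end ProductFamilies

theorem mem_span_of_ofReal_mem_span {κ α : Type*} [Fintype κ] {f : κ → α → ℝ} {g : α → ℝ}
    (h : (fun z => (g z : ℂ)) ∈ span ℂ (Set.range fun t z => (f t z : ℂ))) :
    g ∈ span ℝ (Set.range f) := by
  obtain ⟨d, hd⟩ := (mem_span_range_iff_exists_fun ℂ).mp h
  refine (mem_span_range_iff_exists_fun ℝ).mpr ⟨fun t => (d t).re, funext fun z => ?_⟩
  have := congrArg Complex.re (congrFun hd z)
  simpa [Finset.sum_apply, Complex.re_sum] using this

section Kernel

open Complex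

lemma cexp_I_mul_dotZ {m : ℕ} (ω : Fin m → ℤ) (w : Fin m → ℝ) :
    exp (I * (dotZ ω w : ℝ)) = ∏ j, exp (I * ((ω j : ℝ) * w j : ℝ)) := by
  rw [dotZ, ofReal_sum, Finset.mul_sum, exp_sum]

lemma sum_cexp_I_mul_neg_one_zero_one (x : ℝ) :
    ∑ k ∈ ({-1, 0, 1} : Finset ℤ), exp (I * ((k : ℝ) * x : ℝ)) =
      ((1 + 2 * Real.cos x : ℝ) : ℂ) := by
  rw [Finset.sum_insert (by decide), Finset.sum_insert (by decide), Finset.sum_singleton]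
  push_cast
  rw [cos, show I * (-1 * (x : ℂ)) = -x * I by ring, show I * (0 * (x : ℂ)) = 0 by ring,
    show I * (1 * (x : ℂ)) = x * I by ring, exp_zero]
  ring

lemma sum_Omega_cexp_I_mul_dotZ (m : ℕ) (w : Fin m → ℝ) :
    ∑ ω ∈ Omega m, exp (I * (dotZ ω w : ℝ)) = ((∏ j, (1 + 2 * Real.cos (w j)) : ℝ) : ℂ) := by
  simp only [cexp_I_mul_dotZ, Omega]
  rw [← Finset.prod_univ_sum (fun _ => {-1, 0, 1}) fun j (k : ℤ) => exp (I * ((k : ℝ) * w j : ℝ))]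
  simp only [sum_cexp_I_mul_neg_one_zero_one, ofReal_prod]

lemma Kker_eq_prod (m : ℕ) (x z : Fin m → ℝ) :
    Kker m x z = ((2 * Real.pi) ^ m)⁻¹ * ∏ j, (1 + 2 * Real.cos (x j - z j)) := by
  rw [Kker, sum_Omega_cexp_I_mul_dotZ, ofReal_re]
  rfl

def Hsub (m : ℕ) : Submodule ℝ ((Fin m → ℝ) → ℝ) where
  carrier := Hset m
  zero_mem' := ⟨0, by simp, by simp⟩
  add_mem' := by
    rintro g g' ⟨c, hc, hg⟩ ⟨c', hc', hg'⟩
    refine ⟨c + c', fun ω => by simp [hc, hc'], fun z => ?_⟩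
    simp [hg, hg', add_mul, Finset.sum_add_distrib]
  smul_mem' := by
    rintro r g ⟨c, hc, hg⟩
    refine ⟨(r : ℂ) • c, fun ω => by simp [hc], fun z => ?_⟩
    simp [hg, Finset.mul_sum, mul_assoc]

lemma Kfun_mem_Hset (m : ℕ) (x : Fin m → ℝ) : Kfun m x ∈ Hset m := by
  refine ⟨fun ω => (((2 * Real.pi) ^ m)⁻¹ : ℝ) * exp (-(I * (dotZ ω x : ℝ))), fun ω => ?_,
    fun z => ?_⟩
  · simp [dotZ, ← exp_conj, map_ofNat]
  · have hcoeff : ∀ ω, exp (-(I * (dotZ ω x : ℝ))) * exp (I * (dotZ ω z : ℝ)) =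
        exp (I * (dotZ ω (z - x) : ℝ)) := fun ω => by
      rw [← exp_add, dotZ, dotZ, dotZ]
      push_cast [Pi.sub_apply, mul_sub, Finset.sum_sub_distrib]
      ring_nf
    simp only [mul_assoc, hcoeff, ← Finset.mul_sum, sum_Omega_cexp_I_mul_dotZ, Kfun,
      Kker_eq_prod, ← ofReal_mul]
    simp [← Real.cos_neg (x _ - z _)]

noncomputable def trigBasis : Fin 3 → ℝ → ℝ := ![fun _ => 1, Real.cos, Real.sin]

lemma cexp_I_mul_int_mem_span_trigBasis {k : ℤ} (hk : k ∈ ({-1, 0, 1} : Finset ℤ)) :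
    (fun x : ℝ => exp (I * ((k : ℝ) * x : ℝ))) ∈
      span ℂ (Set.range fun t x => (trigBasis t x : ℂ)) := by
  refine (mem_span_range_iff_exists_fun ℂ).mpr ⟨![1 - k ^ 2, k ^ 2, k * I], funext fun x => ?_⟩
  have hexp : exp (I * ((k : ℝ) * x : ℝ)) = cos (k * x) + sin (k * x) * I := by
    rw [← exp_mul_I]; push_cast; ring_nf
  simp only [Finset.sum_apply, Fin.sum_univ_three, Pi.smul_apply, smul_eq_mul, trigBasis,
    hexp]
  simp only [Finset.mem_insert, Finset.mem_singleton] at hk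
  rcases hk with rfl | rfl | rfl <;> simp [mul_comm]

lemma Hset_subset_span_piProd_trigBasis (m : ℕ) {g : (Fin m → ℝ) → ℝ} (hg : g ∈ Hset m) :
    g ∈ span ℝ (Set.range (piProd trigBasis : (Fin m → Fin 3) → (Fin m → ℝ) → ℝ)) := by
  obtain ⟨c, -, hc⟩ := hg
  apply mem_span_of_ofReal_mem_span
  have hcomplex : (fun z => (g z : ℂ)) =
      ∑ ω ∈ Omega m, c ω • fun z : Fin m → ℝ => ∏ j, exp (I * ((ω j : ℝ) * z j : ℝ)) := by
    funext z
    simp [hc, cexp_I_mul_dotZ]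
  have hpiProd : (fun t z => ((piProd trigBasis t z : ℝ) : ℂ)) =
      (piProd (fun t x => (trigBasis t x : ℂ)) : (Fin m → Fin 3) → _) := by
    funext t z
    simp [piProd]
  rw [hcomplex, hpiProd]
  refine sum_mem fun ω hω => smul_mem _ _ ?_
  exact prod_mem_span_piProd (f := fun j x => exp (I * ((ω j : ℝ) * x : ℝ))) _
    fun j => cexp_I_mul_int_mem_span_trigBasis (Fintype.mem_piFinset.mp hω j)

noncomputable def kernelFactor : Fin 3 → ℝ → ℝ :=
  ![fun x => 1 - 2 * Real.sin x, fun x => 1 + 2 * Real.cos x, fun x => 1 + 2 * Real.sin x]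

lemma one_add_two_cos_sub_eq_kernelFactor (s : Fin 3) (z : ℝ) :
    1 + 2 * Real.cos (Real.pi / 2 * (((s : ℕ) : ℝ) - 1) - z) = kernelFactor s z := by
  have hcos : Real.cos (-(Real.pi / 2) - z) = -Real.sin z := by
    rw [← Real.cos_neg, neg_sub, sub_neg_eq_add, Real.cos_add_pi_div_two]
  fin_cases s <;> norm_num [kernelFactor, hcos, Real.cos_pi_div_two_sub, ← sub_eq_add_neg]

lemma trigBasis_mem_span_kernelFactor (t : Fin 3) :
    trigBasis t ∈ span ℝ (Set.range kernelFactor) := by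
  rw [mem_span_range_iff_exists_fun]
  fin_cases t <;>
    [use ![1 / 2, 0, 1 / 2]; use ![-1 / 4, 1 / 2, -1 / 4]; use ![-1 / 4, 0, 1 / 4]] <;>
    funext x <;>
    simp only [Finset.sum_apply, Pi.smul_apply, smul_eq_mul, Fin.sum_univ_three, kernelFactor,
      trigBasis, Matrix.cons_val_zero, Matrix.cons_val_one, Matrix.cons_val_two, Matrix.head_cons,
      Matrix.tail_cons, Fin.zero_eta, Fin.mk_one, Fin.reduceFinMk] <;> ring

lemma Kfun_pt3 (m : ℕ) (s : Fin m → Fin 3) :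
    Kfun m (pt3 m s) = ((2 * Real.pi) ^ m)⁻¹ • piProd kernelFactor s := by
  funext z
  simp only [Kfun, Kker_eq_prod, pt3, one_add_two_cos_sub_eq_kernelFactor, Pi.smul_apply,
    smul_eq_mul, piProd]

lemma span_range_Kfun_pt3 (m : ℕ) :
    span ℝ (Set.range fun s => Kfun m (pt3 m s)) = span ℝ (Set.range (piProd kernelFactor)) := by
  have hc : ((2 * Real.pi) ^ m)⁻¹ ≠ 0 := by positivity
  simp_rw [Kfun_pt3]
  rw [Set.range_smul, span_smul_eq_of_isUnit _ _ (.mk0 _ hc)]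

lemma isUnit_kernelFactor_eval :
    IsUnit (Matrix.of fun s t : Fin 3 => kernelFactor s (Real.pi / 2 * t)) := by
  have hM : (Matrix.of fun s t : Fin 3 => kernelFactor s (Real.pi / 2 * t)) =
      !![1, -1, 1; 3, 1, -1; 1, 3, 1] := by
    ext s t
    have hπ : 2 * (Real.pi / 2) = Real.pi := by ring
    fin_cases s <;> fin_cases t <;> norm_num [kernelFactor, mul_comm _ (2 : ℝ), hπ]
  rw [hM, Matrix.isUnit_iff_isUnit_det, Matrix.det_fin_three]
  simp only [Matrix.of_apply, Matrix.cons_val', Matrix.cons_val_zero, Matrix.cons_val_one,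
    Matrix.cons_val_two, Matrix.head_cons, Matrix.tail_cons, Matrix.empty_val',
    Matrix.cons_val_fin_one]
  norm_num

end Kernel

theorem Kgrid3_basis_of_H_general (m : ℕ) :
    LinearIndependent ℝ (fun s : Fin m → Fin 3 => Kfun m (pt3 m s)) ∧
      (Submodule.span ℝ (Set.range fun s : Fin m → Fin 3 => Kfun m (pt3 m s)) :
        Set ((Fin m → ℝ) → ℝ)) = Hset m := by
  have hc : ((2 * Real.pi) ^ m)⁻¹ ≠ 0 := by positivity
  refine ⟨?_, subset_antisymm ?_ ?_⟩
  · simp_rw [Kfun_pt3]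
    exact (linearIndependent_piProd _ _ isUnit_kernelFactor_eval).units_smul
      fun _ => Units.mk0 _ hc
  · exact (span_le (p := Hsub m)).mpr (Set.range_subset_iff.mpr fun s => Kfun_mem_Hset m _)
  · intro g hg
    rw [span_range_Kfun_pt3]
    exact span_range_piProd_le trigBasis_mem_span_kernelFactor
      (Hset_subset_span_piProd_trigBasis m hg)

/-- the family `(K_q)_{q ∈ (π/2)·{-1,0,1}^m}` (indexed by the `3^m` grid
points) is a basis of `H`: it is linearly independent and spans `H`. -/
theorem Kgrid3_basis_of_H (m : ℕ) (hm : 0 < m) :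
    LinearIndependent ℝ (fun s : Fin m → Fin 3 => Kfun m (pt3 m s)) ∧
      (Submodule.span ℝ (Set.range fun s : Fin m → Fin 3 => Kfun m (pt3 m s)) :
        Set ((Fin m → ℝ) → ℝ)) = Hset m :=
  Kgrid3_basis_of_H_general m
end
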